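/- Let 1 < α < 2 and t > 0. Then −cos(π/α) > 0, sin(π/(2α)) > √(−cos(π/α)), so that p := ( sin(π/(2α)) − √(−cos(π/α)) ) / ( 2 sin(π/(2α)) ) lies in (0,1); moreover, with this choice of p the density f = f_{α,p,t} satisfies f′( t √(−cos(π/α)) ) = 0, i.e. x = t √(−cos(π/α)) is a stationary point of f. -/

import Mathlib

open Real

/-- The mixture-of-asymmetric-Cauchy probability density `f_{α,p,t}`. -/
noncomputable def cauchyMixDensity (α p t x : ℝ) : ℝ :=
  (t * Real.cos (π / (2 * α)) / π) *
    ((x ^ 2 + t ^ 2 + 2 * (2 * p - 1) * x * t * Real.sin (π / (2 * α))) /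
      (x ^ 4 + t ^ 4 + 2 * x ^ 2 * t ^ 2 * Real.cos (π / α)))

/-!
Put `θ = π/(2α)`, `s = sin θ` and `u = √(-cos 2θ)`. Since `-cos 2θ = s² - cos² θ`, we get
`0 ≤ u < s`, whence `p = (s - u)/(2s) ∈ (0,1)`. This `p` makes `(2p - 1) s = -u`, and then at
`x₀ = t u` the numerator `x² + t² - 2uxt` and the denominator `x⁴ + t⁴ - 2u²x²t²` of the density
are both stationary, so their quotient is.
-/

theorem HasDerivAt.div_of_deriv_eq_zero {𝕜 : Type*} [NontriviallyNormedField 𝕜] {f g : 𝕜 → 𝕜}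
    {x : 𝕜} (hf : HasDerivAt f 0 x) (hg : HasDerivAt g 0 x) (hgx : g x ≠ 0) :
    HasDerivAt (fun y => f y / g y) 0 x :=
  (hf.div hg hgx).congr_deriv (by simp)

theorem neg_cos_pi_div_mem_Ioo {α : ℝ} (hα1 : 1 < α) (hα2 : α < 2) :
    -Real.cos (π / α) ∈ Set.Ioo 0 1 := by
  have hα0 : 0 < α := by linarith
  have hlow : π / 2 < π / α := div_lt_div_of_pos_left pi_pos hα0 hα2
  have hhigh : π / α < π := div_lt_self pi_pos hα1
  constructor
  · linarith [cos_neg_of_pi_div_two_lt_of_lt hlow (by linarith [pi_pos])]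
  · linarith [cos_pi ▸ cos_lt_cos_of_nonneg_of_le_pi (by positivity) le_rfl hhigh]

theorem sqrt_neg_cos_two_mul_lt_sin {θ : ℝ} (hθ0 : 0 < θ) (hθ : θ < π / 2) :
    √(-Real.cos (2 * θ)) < Real.sin θ := by
  have hsin : 0 < Real.sin θ := sin_pos_of_pos_of_lt_pi hθ0 (by linarith [pi_pos])
  have hcos : 0 < Real.cos θ := cos_pos_of_mem_Ioo ⟨by linarith, hθ⟩
  rw [sqrt_lt' hsin, cos_two_mul']
  nlinarith

theorem cauchyMixDensity_hasDerivAt_zero {α p t u : ℝ} (ht : t ≠ 0)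
    (hu : u ^ 2 = -Real.cos (π / α)) (hu1 : u ^ 2 < 1)
    (hp : (2 * p - 1) * Real.sin (π / (2 * α)) = -u) :
    HasDerivAt (cauchyMixDensity α p t) 0 (t * u) := by
  set s := Real.sin (π / (2 * α))
  have hc : Real.cos (π / α) = -u ^ 2 := by linarith
  have hnum : HasDerivAt (fun x => x ^ 2 + t ^ 2 + 2 * (2 * p - 1) * x * t * s) 0 (t * u) :=
    (((hasDerivAt_pow 2 (t * u)).add_const (t ^ 2)).add
      ((((hasDerivAt_id' (t * u)).const_mul (2 * (2 * p - 1))).mul_const t).mul_const s))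
      |>.congr_deriv (by linear_combination 2 * t * hp)
  have hden : HasDerivAt (fun x => x ^ 4 + t ^ 4 + 2 * x ^ 2 * t ^ 2 * Real.cos (π / α)) 0
      (t * u) :=
    (((hasDerivAt_pow 4 (t * u)).add_const (t ^ 4)).add
      ((((hasDerivAt_pow 2 (t * u)).const_mul 2).mul_const (t ^ 2)).mul_const
        (Real.cos (π / α)))).congr_deriv (by rw [hc]; push_cast; ring)
  have hden_ne : (t * u) ^ 4 + t ^ 4 + 2 * (t * u) ^ 2 * t ^ 2 * Real.cos (π / α) ≠ 0 := by
    have hu4 : 0 < 1 - (u ^ 2) ^ 2 := by nlinarith [sq_nonneg u]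
    rw [hc]
    convert mul_pos (pow_pos (sq_pos_of_ne_zero ht) 2) hu4 |>.ne' using 1
    ring
  exact ((hnum.div_of_deriv_eq_zero hden hden_ne).const_mul
    (t * Real.cos (π / (2 * α)) / π)).congr_deriv (mul_zero _)

/-- For `1 < α < 2` and `t > 0`: `−cos(π/α) > 0`,
`sin(π/(2α)) > √(−cos(π/α))`, so `p = (sin(π/(2α)) − √(−cos(π/α)))/(2 sin(π/(2α)))`
lies in `(0,1)`; moreover with this `p` the density `f_{α,p,t}` has a
stationary point at `x = t √(−cos(π/α))`. -/
theorem cauchyMix_stationary_point (α t : ℝ) (hα1 : 1 < α) (hα2 : α < 2)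
    (ht : 0 < t) :
    0 < -Real.cos (π / α) ∧
    Real.sqrt (-Real.cos (π / α)) < Real.sin (π / (2 * α)) ∧
    0 < (Real.sin (π / (2 * α)) - Real.sqrt (-Real.cos (π / α))) /
        (2 * Real.sin (π / (2 * α))) ∧
    (Real.sin (π / (2 * α)) - Real.sqrt (-Real.cos (π / α))) /
        (2 * Real.sin (π / (2 * α))) < 1 ∧
    deriv (cauchyMixDensity α
        ((Real.sin (π / (2 * α)) - Real.sqrt (-Real.cos (π / α))) /
          (2 * Real.sin (π / (2 * α)))) t)
      (t * Real.sqrt (-Real.cos (π / α))) = 0 := by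
  have hα0 : 0 < α := by linarith
  have hθ0 : 0 < π / (2 * α) := by positivity
  have hθ : π / (2 * α) < π / 2 := div_lt_div_of_pos_left pi_pos two_pos (by linarith)
  have hs : 0 < Real.sin (π / (2 * α)) := sin_pos_of_pos_of_lt_pi hθ0 (by linarith [pi_pos])
  obtain ⟨hc0, hc1⟩ := neg_cos_pi_div_mem_Ioo hα1 hα2
  have hus : √(-Real.cos (π / α)) < Real.sin (π / (2 * α)) := by
    have h2θ : 2 * (π / (2 * α)) = π / α := by field_simp
    exact h2θ ▸ sqrt_neg_cos_two_mul_lt_sin hθ0 hθ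
  set s := Real.sin (π / (2 * α))
  set u := √(-Real.cos (π / α))
  have hu : u ^ 2 = -Real.cos (π / α) := sq_sqrt hc0.le
  have hp : (2 * ((s - u) / (2 * s)) - 1) * s = -u := by field_simp; ring
  refine ⟨hc0, hus, div_pos (by linarith) (by linarith),
    (div_lt_one (by linarith)).2 (by linarith [sqrt_nonneg (-Real.cos (π / α))]), ?_⟩
  exact (cauchyMixDensity_hasDerivAt_zero ht.ne' hu (hu ▸ hc1) hp).deriv
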